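/- arXiv:1907.03889 — 3 statements merged into one kernel-verified Lean document; each statement's English description precedes it below -/
import Mathlib

section
/- For j = 1, …, M, let A_j ⊂ M(H_j) be sets of Borel probability measures, each closed under weak convergence of probability measures. Define C := { ν = ∏_{j=1}^M ν^j : ν^j ∈ A_j for j = 1, …, M } ⊂ M(∏_{j=1}^M H_j), the set of product measures with factors in the A_j. Then C is closed under weak convergence of probability measures on ∏_{j=1}^M H_j. -/
/-!
A measure on `∏ i, α i` is a product measure iff it is the product of its marginals, and the
marginals `ν ↦ ν ∘ (eval i)⁻¹` as well as `ProbabilityMeasure.pi` are weakly continuous.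
So the class of products with factors in closed sets `A i` is cut out by closed conditions on
the marginals together with the equalizer of two continuous maps into a Hausdorff space.
-/

open MeasureTheory Filter Topology
open scoped ENNReal NNReal Classical

/-- The product probability measure `∏_{j} ν^j` on `∏_j H_j` with factors `ν j`. -/
noncomputable def prodPM {M : ℕ} {H : Fin M → Type*} [∀ j, MeasurableSpace (H j)]
    (ν : ∀ j, ProbabilityMeasure (H j)) : ProbabilityMeasure (∀ j, H j) :=
  ⟨Measure.pi fun j => (ν j : Measure (H j)), inferInstance⟩

namespace MeasureTheory.ProbabilityMeasure

open Set TopologicalSpace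

variable {ι : Type*} [Fintype ι] {α : ι → Type*} [∀ i, MeasurableSpace (α i)]

lemma map_eval_pi (μ : ∀ i, ProbabilityMeasure (α i)) (i : ι) :
    (ProbabilityMeasure.pi μ).map (measurable_pi_apply i).aemeasurable = μ i :=
  Subtype.ext (measurePreserving_eval (fun i => (μ i : Measure (α i))) i).map_eq

lemma image_pi_univ_pi (A : ∀ i, Set (ProbabilityMeasure (α i))) :
    ProbabilityMeasure.pi '' univ.pi A =
      {ν | (∀ i, ν.map (measurable_pi_apply i).aemeasurable ∈ A i) ∧
        ν = ProbabilityMeasure.pi fun i => ν.map (measurable_pi_apply i).aemeasurable} := by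
  ext ν
  constructor
  · rintro ⟨μ, hμA, rfl⟩
    refine ⟨fun i => ?_, (congrArg ProbabilityMeasure.pi (funext (map_eval_pi μ))).symm⟩
    rw [map_eval_pi]
    exact hμA i (mem_univ i)
  · rintro ⟨hA, hν⟩
    exact ⟨_, fun i _ => hA i, hν.symm⟩

variable [∀ i, TopologicalSpace (α i)] [∀ i, SecondCountableTopology (α i)]
  [∀ i, PseudoMetrizableSpace (α i)] [∀ i, BorelSpace (α i)]

theorem isClosed_image_pi_univ_pi {A : ∀ i, Set (ProbabilityMeasure (α i))}
    (hA : ∀ i, IsClosed (A i)) : IsClosed (ProbabilityMeasure.pi '' univ.pi A) := by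
  have hmarginal (i : ι) :
      Continuous fun ν : ProbabilityMeasure (∀ i, α i) =>
        ν.map (measurable_pi_apply i).aemeasurable :=
    continuous_map (continuous_apply i)
  rw [image_pi_univ_pi, ofPred_and, ofPred_forall]
  exact (isClosed_iInter fun i => (hA i).preimage (hmarginal i)).inter
    (isClosed_eq continuous_id (continuous_pi.comp (_root_.continuous_pi hmarginal)))

end MeasureTheory.ProbabilityMeasure

theorem isClosed_product_class_general
    {M : ℕ} {H : Fin M → Type*}
    [∀ j, NormedAddCommGroup (H j)]
    [∀ j, SecondCountableTopology (H j)]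
    [∀ j, MeasurableSpace (H j)] [∀ j, BorelSpace (H j)]
    (A : ∀ j, Set (ProbabilityMeasure (H j))) (hA : ∀ j, IsClosed (A j)) :
    IsClosed { ν : ProbabilityMeasure (∀ j, H j) |
      ∃ f : ∀ j, ProbabilityMeasure (H j), (∀ j, f j ∈ A j) ∧ ν = prodPM f } := by
  have hprodPM : (prodPM : (∀ j, ProbabilityMeasure (H j)) → _) = ProbabilityMeasure.pi := rfl
  convert ProbabilityMeasure.isClosed_image_pi_univ_pi hA using 1
  ext ν
  simp only [hprodPM, Set.mem_image, Set.mem_univ_pi, eq_comm, Set.mem_ofPred_eq]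

/-- **Closedness of the class of product measures.**
For `j = 1, …, M`, let `A_j ⊂ M(H_j)` be closed under weak convergence of probability
measures on the separable Hilbert space `H_j`.  Then the set
`C = { ∏_{j=1}^M ν^j : ν^j ∈ A_j }` of product measures with factors in the `A_j` is
closed under weak convergence of probability measures on `∏_{j=1}^M H_j`. -/
theorem isClosed_product_class
    {M : ℕ} {H : Fin M → Type*}
    [∀ j, NormedAddCommGroup (H j)] [∀ j, InnerProductSpace ℝ (H j)]
    [∀ j, CompleteSpace (H j)] [∀ j, SecondCountableTopology (H j)]
    [∀ j, MeasurableSpace (H j)] [∀ j, BorelSpace (H j)]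
    (A : ∀ j, Set (ProbabilityMeasure (H j))) (hA : ∀ j, IsClosed (A j)) :
    IsClosed { ν : ProbabilityMeasure (∀ j, H j) |
      ∃ f : ∀ j, ProbabilityMeasure (H j), (∀ j, f j ∈ A j) ∧ ν = prodPM f } :=
  isClosed_product_class_general A hA
end

section
/- For every τ > 0 and every x ∈ ℝ, the Gaussian scale mixture with exponential mixing distribution on the variance yields the Laplace density: ∫_0^∞ (1/√(2πz)) exp(−x²/(2z)) · (1/τ) exp(−z/τ) dz = (1/2)·√(2/τ)·exp(−√(2/τ)·|x|). -/
/-!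
Substituting `z = u²` turns the mixture into a multiple of the Cauchy–Schlömilch integral
`∫₀^∞ exp (-a u² - b / u²) du` with `a = 1/τ`, `b = x²/2`. Completing the square,
`a u² + b / u² = (α u - β / u)² + 2 α β` with `α = √a`, `β = √b`. The involution `u ↦ β / (α u)`
of `(0, ∞)` flips the sign of `α u - β / u`, so `∫ exp (-(α u - β / u)²)` does not change when
the weight `β / (α u²)` is inserted; adding the two copies produces the Jacobian `α + β / u²` of
the bijection `u ↦ α u - β / u` from `(0, ∞)` onto `ℝ`, hence `2 α ∫ exp (-(α u - β / u)²) = √π`.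
-/

open MeasureTheory Real
open scoped Real

open Set

section ChangeOfVariables

variable {E : Type*} [NormedAddCommGroup E] [NormedSpace ℝ E]

theorem integral_Ioi_comp_sq (g : ℝ → E) :
    ∫ u in Ioi (0 : ℝ), (2 * u) • g (u ^ 2) = ∫ z in Ioi (0 : ℝ), g z := by
  rw [← integral_comp_rpow_Ioi_of_pos (g := g) two_pos]
  refine setIntegral_congr_fun measurableSet_Ioi fun u _ => ?_
  norm_num

theorem integral_Ioi_comp_div {k : ℝ} (hk : 0 < k) (g : ℝ → E) :
    ∫ u in Ioi (0 : ℝ), (k / u ^ 2) • g (k / u) = ∫ u in Ioi (0 : ℝ), g u := by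
  have himage : (fun u => k / u) '' Ioi 0 = Ioi 0 :=
    Subset.antisymm (image_subset_iff.2 fun u hu => div_pos hk hu)
      fun u hu => ⟨k / u, div_pos hk hu, div_div_cancel₀ hk.ne'⟩
  have hderiv : ∀ u ∈ Ioi (0 : ℝ), HasDerivWithinAt (fun u => k / u) (-(k / u ^ 2)) (Ioi 0) u :=
    fun u hu => by
      simpa [div_eq_mul_inv] using ((hasDerivAt_inv (ne_of_gt hu)).const_mul k).hasDerivWithinAt
  have hinj : InjOn (fun u => k / u) (Ioi 0) := fun u _ v _ h => by
    simpa [div_eq_mul_inv, hk.ne'] using h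
  conv_rhs =>
    rw [← himage, integral_image_eq_integral_abs_deriv_smul measurableSet_Ioi hderiv hinj]
  refine setIntegral_congr_fun measurableSet_Ioi fun u hu => ?_
  rw [abs_neg, abs_of_pos (div_pos hk (pow_pos hu 2))]

end ChangeOfVariables

section CauchySchlomilch

variable {a b : ℝ}

theorem hasDerivAt_mul_sub_div (a b : ℝ) {u : ℝ} (hu : u ≠ 0) :
    HasDerivAt (fun u => a * u - b / u) (a + b / u ^ 2) u := by
  have h := ((hasDerivAt_id u).const_mul a).sub ((hasDerivAt_inv hu).const_mul b)
  rwa [show a * 1 - b * -(u ^ 2)⁻¹ = a + b / u ^ 2 by ring] at h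

theorem strictMonoOn_mul_sub_div (ha : 0 < a) (hb : 0 ≤ b) :
    StrictMonoOn (fun u => a * u - b / u) (Ioi 0) := fun u hu v _ huv => by
  linarith [mul_lt_mul_of_pos_left huv ha, div_le_div_of_nonneg_left hb hu huv.le]

theorem image_mul_sub_div_Ioi (ha : 0 < a) (hb : 0 < b) :
    (fun u => a * u - b / u) '' Ioi 0 = univ := by
  refine eq_univ_of_forall fun t => ?_
  set r := √(t ^ 2 + 4 * a * b)
  have hr : r ^ 2 = t ^ 2 + 4 * a * b := sq_sqrt (by positivity)
  have hrt : |t| < r := by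
    rw [← sqrt_sq_eq_abs]; exact sqrt_lt_sqrt (sq_nonneg t) (by nlinarith)
  -- the positive root of `a u² - t u - b = 0`
  set u := (t + r) / (2 * a)
  have hu : 0 < u := div_pos (by linarith [neg_abs_le t]) (by positivity)
  have hquad : a * u ^ 2 - b = t * u := by
    simp only [u]; field_simp; linear_combination hr
  refine ⟨u, hu, ?_⟩
  field_simp
  linarith

theorem integrableOn_Ioi_gaussian_comp_mul_sub_div (ha : 0 < a) (hb : 0 < b) :
    IntegrableOn (fun u => (a + b / u ^ 2) * exp (-(a * u - b / u) ^ 2)) (Ioi 0) := by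
  have h := integrableOn_image_iff_integrableOn_abs_deriv_smul measurableSet_Ioi
    (fun u hu => (hasDerivAt_mul_sub_div a b (ne_of_gt hu)).hasDerivWithinAt)
    (strictMonoOn_mul_sub_div ha hb.le).injOn fun t => exp (-t ^ 2)
  rw [image_mul_sub_div_Ioi ha hb, integrableOn_univ] at h
  refine (integrableOn_congr_fun (fun u hu => ?_) measurableSet_Ioi).1
    (h.1 (integrable_exp_neg_mul_sq one_pos |>.congr ?_))
  · simp [abs_of_pos (by positivity : 0 < a + b / u ^ 2)]
  · simp

theorem integral_Ioi_gaussian_comp_mul_sub_div (ha : 0 < a) (hb : 0 < b) :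
    ∫ u in Ioi 0, (a + b / u ^ 2) * exp (-(a * u - b / u) ^ 2) = √π := by
  have h := integral_image_eq_integral_abs_deriv_smul measurableSet_Ioi
    (fun u hu => (hasDerivAt_mul_sub_div a b (ne_of_gt hu)).hasDerivWithinAt)
    (strictMonoOn_mul_sub_div ha hb.le).injOn fun t => exp (-t ^ 2)
  rw [image_mul_sub_div_Ioi ha hb, setIntegral_univ] at h
  have hgauss : ∫ t, exp (-t ^ 2) = √π := by simpa using integral_gaussian 1
  rw [← hgauss, h]
  refine setIntegral_congr_fun measurableSet_Ioi fun u hu => ?_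
  rw [smul_eq_mul, abs_of_pos (by positivity : 0 < a + b / u ^ 2)]

theorem integral_Ioi_exp_neg_sq_mul_sub_div (ha : 0 < a) (hb : 0 < b) :
    ∫ u in Ioi 0, exp (-(a * u - b / u) ^ 2) = √π / (2 * a) := by
  set h : ℝ → ℝ := fun u => exp (-(a * u - b / u) ^ 2)
  set k := b / a
  have hk : 0 < k := div_pos hb ha
  -- `u ↦ k / u` changes the sign of `a u - b / u`
  have hsymm : ∫ u in Ioi 0, (k / u ^ 2) * h u = ∫ u in Ioi 0, h u := by
    rw [← integral_Ioi_comp_div hk h]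
    refine setIntegral_congr_fun measurableSet_Ioi fun u _ => ?_
    have : a * (k / u) - b / (k / u) = -(a * u - b / u) := by
      simp only [k]; field_simp; ring
    simp only [h, smul_eq_mul, this, neg_sq]
  have hint := integrableOn_Ioi_gaussian_comp_mul_sub_div ha hb
  have hint₁ : IntegrableOn h (Ioi 0) := by
    refine (hint.const_mul a⁻¹).mono' (by fun_prop) (ae_of_all _ fun u => ?_)
    rw [norm_of_nonneg (exp_pos _).le, ← mul_assoc]
    refine le_mul_of_one_le_left (exp_pos _).le ?_
    rw [mul_add, inv_mul_cancel₀ ha.ne']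
    have : 0 ≤ a⁻¹ * (b / u ^ 2) := by positivity
    linarith
  have hint₂ : IntegrableOn (fun u => (k / u ^ 2) * h u) (Ioi 0) := by
    refine (hint.const_mul a⁻¹).mono' (by fun_prop) (ae_of_all _ fun u => ?_)
    rw [norm_of_nonneg (by positivity), ← mul_assoc]
    refine mul_le_mul_of_nonneg_right ?_ (exp_pos _).le
    simp only [k]
    have : b / a / u ^ 2 = a⁻¹ * (b / u ^ 2) := by ring
    rw [mul_add, inv_mul_cancel₀ ha.ne', this]
    linarith
  have hsplit : ∀ u ∈ Ioi (0 : ℝ),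
      (a + b / u ^ 2) * h u = a * h u + a * ((k / u ^ 2) * h u) := fun u _ => by
    simp only [k]; field_simp
  have := integral_Ioi_gaussian_comp_mul_sub_div ha hb
  rw [setIntegral_congr_fun measurableSet_Ioi hsplit,
    integral_add (hint₁.const_mul a) (hint₂.const_mul a), integral_const_mul, integral_const_mul,
    hsymm] at this
  rw [← this]; field_simp; ring

theorem integral_Ioi_exp_neg_mul_sq_sub_div_sq (ha : 0 < a) (hb : 0 ≤ b) :
    ∫ u in Ioi 0, exp (-(a * u ^ 2) - b / u ^ 2) =
      (1 / 2) * √(π / a) * exp (-2 * √(a * b)) := by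
  rcases hb.eq_or_lt with rfl | hb
  · simp only [zero_div, sub_zero, mul_zero, sqrt_zero, exp_zero, mul_one, ← neg_mul,
      integral_gaussian_Ioi]
    ring
  have hsq : ∀ u ∈ Ioi (0 : ℝ), exp (-(a * u ^ 2) - b / u ^ 2)
      = exp (-2 * (√a * √b)) * exp (-(√a * u - √b / u) ^ 2) := fun u (hu : 0 < u) => by
    have : (√a * u - √b / u) ^ 2 = a * u ^ 2 - 2 * (√a * √b) + b / u ^ 2 := by
      rw [sub_sq, mul_pow, div_pow, sq_sqrt ha.le, sq_sqrt hb.le]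
      field_simp
    rw [← exp_add, this]
    ring_nf
  rw [setIntegral_congr_fun measurableSet_Ioi hsq, integral_const_mul,
    integral_Ioi_exp_neg_sq_mul_sub_div (sqrt_pos.2 ha) (sqrt_pos.2 hb), sqrt_mul ha.le,
    sqrt_div' _ ha.le]
  ring

end CauchySchlomilch

/-- **Gaussian scale mixture representation of the Laplace density.**
For every `τ > 0` and every `x ∈ ℝ`,
`∫_0^∞ (1/√(2πz)) exp(−x²/(2z)) · (1/τ) exp(−z/τ) dz = (1/2)√(2/τ) exp(−√(2/τ)|x|)`. -/
theorem gaussian_scale_mixture_exponential_eq_laplace (τ : ℝ) (hτ : 0 < τ) (x : ℝ) :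
    (∫ z in Set.Ioi (0 : ℝ),
        (1 / Real.sqrt (2 * π * z)) * Real.exp (-x ^ 2 / (2 * z)) *
          ((1 / τ) * Real.exp (-z / τ)))
      = (1 / 2) * Real.sqrt (2 / τ) * Real.exp (-(Real.sqrt (2 / τ)) * |x|) := by
  have hsub : ∀ u ∈ Ioi (0 : ℝ),
      (2 * u) • ((1 / √(2 * π * u ^ 2)) * exp (-x ^ 2 / (2 * u ^ 2)) *
        ((1 / τ) * exp (-u ^ 2 / τ))) =
      2 / (τ * √(2 * π)) * exp (-(τ⁻¹ * u ^ 2) - x ^ 2 / 2 / u ^ 2) := by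
    intro u (hu : 0 < u)
    have : exp (-(τ⁻¹ * u ^ 2) - x ^ 2 / 2 / u ^ 2) =
        exp (-x ^ 2 / (2 * u ^ 2)) * exp (-u ^ 2 / τ) := by
      rw [← exp_add]; ring_nf
    rw [this, sqrt_mul (by positivity), sqrt_sq (le_of_lt hu), smul_eq_mul]
    field_simp
  rw [← integral_Ioi_comp_sq, setIntegral_congr_fun measurableSet_Ioi hsub, integral_const_mul,
    integral_Ioi_exp_neg_mul_sq_sub_div_sq (inv_pos.2 hτ) (by positivity)]
  have hexp : τ⁻¹ * (x ^ 2 / 2) = (√(2 / τ) * |x| / 2) ^ 2 := by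
    rw [div_pow, mul_pow, sq_sqrt (by positivity), sq_abs]; ring
  rw [hexp, sqrt_sq (by positivity), div_inv_eq_mul, sqrt_mul pi_pos.le, sqrt_mul zero_le_two,
    sqrt_div zero_le_two]
  field_simp
  rw [sq_sqrt hτ.le, sq_sqrt zero_le_two, mul_comm]
end

section
/- Let τ > 0 and a > 0, and set m = √(2/(τa)) and ζ = 2/τ. Let μ_0^w be the probability measure on (0, ∞) with Lebesgue density w ↦ (1/τ) exp(−1/(τw)) · (1/w²). Then the probability measure ν^w on (0, ∞) obtained by reweighting μ_0^w with the unnormalized density w ↦ w^{1/2} exp(−(a/2) w) (normalized to total mass one) is the inverse Gaussian distribution IG(m, ζ), i.e., ν^w has Lebesgue density w ↦ √(ζ/(2π w³)) · exp(−ζ (w − m)² / (2 m² w)) on (0, ∞). In particular ∫_0^∞ w^{−3/2} exp(−(a/2)w − 1/(τw)) dw = √(πτ) · exp(−√(2a/τ)). -/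
/-!
Substituting `w = t⁻²` turns the normalizing integral `∫₀^∞ w^(-3/2) exp(-p w - q / w) dw` into
twice the Cauchy–Schlömilch integral `∫₀^∞ exp(-q t² - q c² / t²) dt` with `q c² = p`. Writing
`t = ψ(s)` for the inverse `ψ` of `t ↦ t - c / t`, the exponent becomes `-q s² - 2 q c`, and
`ψ' - 1/2` is odd, so only half of a Gaussian integral survives. Knowing the normalizing
constant, the reweighted density is the inverse Gaussian one by completing the square.
-/

open MeasureTheory Real Set
open scoped ENNReal Real

theorem integral_eq_zero_of_odd {G E : Type*} [MeasurableSpace G] [AddGroup G] [MeasurableNeg G]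
    [NormedAddCommGroup E] [NormedSpace ℝ E] (μ : Measure G) [μ.IsNegInvariant] {f : G → E}
    (hf : ∀ x, f (-x) = -f x) : ∫ x, f x ∂μ = 0 := by
  have h := integral_neg_eq_self f μ
  simp only [hf, integral_neg] at h
  have h2 : (2 : ℝ) • ∫ x, f x ∂μ = 0 := by
    rw [two_smul]; nth_rw 1 [← h]; exact neg_add_cancel _
  exact (smul_eq_zero.mp h2).resolve_left two_ne_zero

/-- The positive root `t` of `t ^ 2 - s * t - c = 0`, i.e. the inverse of `t ↦ t - c / t`
on `(0, ∞)`. -/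
noncomputable def invSubDiv (c s : ℝ) : ℝ := (s + √(s ^ 2 + 4 * c)) / 2

section invSubDiv

variable {c : ℝ}

lemma abs_lt_sqrt_sq_add (hc : 0 < c) (s : ℝ) : |s| < √(s ^ 2 + 4 * c) := by
  rw [← sqrt_sq_eq_abs]
  exact sqrt_lt_sqrt (sq_nonneg s) (by linarith)

lemma abs_div_sqrt_sq_add_le_one (hc : 0 < c) (s : ℝ) : |s / √(s ^ 2 + 4 * c)| ≤ 1 := by
  rw [abs_div, abs_of_nonneg (sqrt_nonneg _)]
  exact div_le_one_of_le₀ (abs_lt_sqrt_sq_add hc s).le (sqrt_nonneg _)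

lemma invSubDiv_pos (hc : 0 < c) (s : ℝ) : 0 < invSubDiv c s := by
  unfold invSubDiv
  linarith [abs_lt_sqrt_sq_add hc s, neg_abs_le s]

lemma invSubDiv_sub_div (hc : 0 < c) (s : ℝ) : invSubDiv c s - c / invSubDiv c s = s := by
  have hψ := (invSubDiv_pos hc s).ne'
  have hr : √(s ^ 2 + 4 * c) ^ 2 = s ^ 2 + 4 * c := sq_sqrt (by positivity)
  have hroot : invSubDiv c s ^ 2 = s * invSubDiv c s + c := by
    unfold invSubDiv; linear_combination hr / 4
  field_simp
  linear_combination hroot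

lemma invSubDiv_sub_div_self (hc : 0 < c) {t : ℝ} (ht : 0 < t) : invSubDiv c (t - c / t) = t := by
  have hr : √((t - c / t) ^ 2 + 4 * c) = t + c / t := by
    rw [show (t - c / t) ^ 2 + 4 * c = (t + c / t) ^ 2 by field_simp; ring,
      sqrt_sq (by positivity)]
  rw [invSubDiv, hr]
  ring

lemma injective_invSubDiv (hc : 0 < c) : Function.Injective (invSubDiv c) :=
  Function.LeftInverse.injective (g := fun t => t - c / t) (invSubDiv_sub_div hc)

lemma range_invSubDiv (hc : 0 < c) : range (invSubDiv c) = Ioi 0 :=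
  Subset.antisymm (range_subset_iff.2 (invSubDiv_pos hc))
    fun t ht => ⟨t - c / t, invSubDiv_sub_div_self hc ht⟩

lemma hasDerivAt_invSubDiv (hc : 0 < c) (s : ℝ) :
    HasDerivAt (invSubDiv c) ((1 + s / √(s ^ 2 + 4 * c)) / 2) s := by
  have hsq : HasDerivAt (fun s : ℝ => s ^ 2 + 4 * c) (2 * s) s := by
    simpa using (hasDerivAt_pow 2 s).add_const (4 * c)
  have hsqrt := hsq.sqrt (by positivity)
  rw [mul_div_mul_left _ _ two_ne_zero] at hsqrt
  exact ((hasDerivAt_id s).add hsqrt).div_const 2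

lemma sq_add_sq_div_sq_invSubDiv (hc : 0 < c) (s : ℝ) :
    invSubDiv c s ^ 2 + c ^ 2 / invSubDiv c s ^ 2 = s ^ 2 + 2 * c := by
  have hψ := (invSubDiv_pos hc s).ne'
  have h := invSubDiv_sub_div hc s
  set ψ := invSubDiv c s
  rw [← h]
  field_simp
  ring

lemma integral_deriv_invSubDiv_mul_gaussian (hc : 0 < c) {q : ℝ} (hq : 0 < q) :
    ∫ s, (1 + s / √(s ^ 2 + 4 * c)) / 2 * exp (-(q * s ^ 2)) = √(π / q) / 2 := by
  have hgauss : Integrable fun s : ℝ => exp (-(q * s ^ 2)) := by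
    simpa only [neg_mul] using integrable_exp_neg_mul_sq hq
  have hodd : Integrable fun s : ℝ => s / √(s ^ 2 + 4 * c) * exp (-(q * s ^ 2)) := by
    exact hgauss.bdd_mul (c := 1) (by fun_prop : Measurable _).aestronglyMeasurable
      (ae_of_all _ (abs_div_sqrt_sq_add_le_one hc))
  have hodd_zero : ∫ s, s / √(s ^ 2 + 4 * c) * exp (-(q * s ^ 2)) = 0 :=
    integral_eq_zero_of_odd volume fun s => by simp only [neg_sq, neg_div, neg_mul]
  calc ∫ s, (1 + s / √(s ^ 2 + 4 * c)) / 2 * exp (-(q * s ^ 2))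
      = ∫ s, (exp (-(q * s ^ 2)) + s / √(s ^ 2 + 4 * c) * exp (-(q * s ^ 2))) / 2 := by
        congr 1; ext s; ring
    _ = ((∫ s, exp (-(q * s ^ 2))) + 0) / 2 := by
        rw [integral_div, integral_add hgauss hodd, hodd_zero]
    _ = √(π / q) / 2 := by simp_rw [add_zero, ← integral_gaussian, neg_mul]

theorem integral_exp_neg_mul_sq_sub_mul_sq_div_sq (hc : 0 < c) {q : ℝ} (hq : 0 < q) :
    ∫ t in Ioi 0, exp (-(q * t ^ 2) - q * c ^ 2 / t ^ 2) = √(π / q) / 2 * exp (-(2 * q * c)) := by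
  have hsub := integral_image_eq_integral_abs_deriv_smul MeasurableSet.univ
    (fun s _ => (hasDerivAt_invSubDiv hc s).hasDerivWithinAt) (injective_invSubDiv hc).injOn
    (fun t => exp (-(q * t ^ 2) - q * c ^ 2 / t ^ 2))
  rw [image_univ, range_invSubDiv hc, Measure.restrict_univ] at hsub
  rw [hsub, ← integral_deriv_invSubDiv_mul_gaussian hc hq, ← integral_mul_const]
  congr 1; ext s
  have hderiv_nonneg : 0 ≤ (1 + s / √(s ^ 2 + 4 * c)) / 2 := by
    linarith [(abs_le.mp (abs_div_sqrt_sq_add_le_one hc s)).1]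
  have hexponent : -(q * invSubDiv c s ^ 2) - q * c ^ 2 / invSubDiv c s ^ 2
      = -(q * s ^ 2) + -(2 * q * c) := by
    linear_combination (-q) * sq_add_sq_div_sq_invSubDiv hc s
  rw [abs_of_nonneg hderiv_nonneg, smul_eq_mul, hexponent, exp_add]
  ring

end invSubDiv

theorem integral_rpow_neg_three_halves_mul_exp {p q : ℝ} (hp : 0 < p) (hq : 0 < q) :
    ∫ w in Ioi 0, w ^ (-(3 : ℝ) / 2) * exp (-(p * w) - q / w)
      = √(π / q) * exp (-(2 * √(p * q))) := by
  set c := √(p / q)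
  have hc : 0 < c := sqrt_pos.2 (div_pos hp hq)
  have hqc2 : q * c ^ 2 = p := by rw [sq_sqrt (div_pos hp hq).le]; field_simp
  have hqc : q * c = √(p * q) := by
    rw [show p * q = q ^ 2 * (p / q) by field_simp, sqrt_mul (sq_nonneg q), sqrt_sq hq.le]
  rw [← integral_comp_rpow_Ioi _ (p := -2) (by norm_num)]
  calc _ = ∫ t in Ioi 0, 2 * exp (-(q * t ^ 2) - q * c ^ 2 / t ^ 2) := by
        refine setIntegral_congr_fun measurableSet_Ioi fun t (ht : 0 < t) => ?_
        have hinv_sq : t ^ (-2 : ℝ) = (t ^ 2)⁻¹ := by rw [rpow_neg ht.le, rpow_two]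
        have hinv_cube : t ^ (-2 - 1 : ℝ) = (t ^ 3)⁻¹ := by norm_num [rpow_neg ht.le]
        have hcube : (t ^ (-2 : ℝ)) ^ (-3 / 2 : ℝ) = t ^ 3 := by rw [← rpow_mul ht.le]; norm_num
        rw [hcube, hinv_sq, hinv_cube, abs_neg, abs_two, smul_eq_mul, ← hqc2]
        field_simp
        ring_nf
    _ = √(π / q) * exp (-(2 * √(p * q))) := by
        rw [integral_const_mul, integral_exp_neg_mul_sq_sub_mul_sq_div_sq hc hq, mul_assoc, hqc]
        ring

theorem integral_inverseGaussian_kernel {τ a : ℝ} (hτ : 0 < τ) (ha : 0 < a) :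
    ∫ w in Ioi 0, w ^ (-(3 : ℝ) / 2) * exp (-(a / 2) * w - 1 / (τ * w))
      = √(π * τ) * exp (-√(2 * a / τ)) := by
  have h := integral_rpow_neg_three_halves_mul_exp (half_pos ha) (one_div_pos.2 hτ)
  have hπτ : π / (1 / τ) = π * τ := by field_simp
  have hexponent : 2 * √(a / 2 * (1 / τ)) = √(2 * a / τ) := by
    rw [show 2 * a / τ = 2 ^ 2 * (a / 2 * (1 / τ)) by field_simp,
      sqrt_mul (by norm_num : (0 : ℝ) ≤ 2 ^ 2), sqrt_sq (by norm_num : (0 : ℝ) ≤ 2)]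
  simp_rw [hπτ, hexponent, div_div, ← neg_mul] at h
  exact h

lemma rpow_neg_three_halves {w : ℝ} (hw : 0 < w) : w ^ (-(3 : ℝ) / 2) = √w / w ^ 2 := by
  rw [sqrt_eq_rpow, ← rpow_two, ← rpow_sub hw]
  norm_num

lemma integral_withDensity_ofReal {α E : Type*} [MeasurableSpace α] [NormedAddCommGroup E]
    [NormedSpace ℝ E] {μ : Measure α} {f : α → ℝ} (hf : Measurable f) (hf0 : ∀ᵐ x ∂μ, 0 ≤ f x)
    (g : α → E) : ∫ x, g x ∂μ.withDensity (fun x => ENNReal.ofReal (f x)) = ∫ x, f x • g x ∂μ := by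
  rw [integral_withDensity_eq_integral_toReal_smul hf.ennreal_ofReal
    (ae_of_all _ fun _ => ENNReal.ofReal_lt_top)]
  exact integral_congr_ae (hf0.mono fun x hx => congrArg (· • g x) (ENNReal.toReal_ofReal hx))

lemma withDensity_ofReal_withDensity_ofReal {α : Type*} [MeasurableSpace α] {μ : Measure α}
    {f g : α → ℝ} (hf : Measurable f) (hg : Measurable g) (hf0 : ∀ x, 0 ≤ f x) :
    (μ.withDensity fun x => ENNReal.ofReal (f x)).withDensity (fun x => ENNReal.ofReal (g x))
      = μ.withDensity fun x => ENNReal.ofReal (f x * g x) := by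
  rw [← withDensity_mul _ hf.ennreal_ofReal hg.ennreal_ofReal]
  congr 1
  ext x
  exact (ENNReal.ofReal_mul (hf0 x)).symm

theorem integral_sqrt_mul_exp_withDensity_inverseExponential {τ a : ℝ} (hτ : 0 < τ)
    (ha : 0 < a) :
    ∫ v, √v * exp (-(a / 2) * v) ∂((volume.restrict (Ioi (0 : ℝ))).withDensity
        fun u => ENNReal.ofReal ((1 / τ) * exp (-(1 / (τ * u))) * (1 / u ^ 2)))
      = √(π * τ) * exp (-√(2 * a / τ)) / τ := by
  rw [integral_withDensity_ofReal (by fun_prop) (ae_of_all _ fun u => by positivity),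
    ← integral_inverseGaussian_kernel hτ ha, ← integral_div]
  refine setIntegral_congr_fun measurableSet_Ioi fun w (hw : 0 < w) => ?_
  rw [smul_eq_mul, rpow_neg_three_halves hw, sub_eq_add_neg, exp_add]
  field_simp

lemma inverseExponential_mul_reweight_eq_inverseGaussian {τ a m ζ w : ℝ} (hτ : 0 < τ)
    (ha : 0 < a) (hm : m = √(2 / (τ * a))) (hζ : ζ = 2 / τ) (hw : 0 < w) :
    (1 / τ) * exp (-(1 / (τ * w))) * (1 / w ^ 2) *
        (√w * exp (-(a / 2) * w) / (√(π * τ) * exp (-√(2 * a / τ)) / τ))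
      = √(ζ / (2 * π * w ^ 3)) * exp (-(ζ * (w - m) ^ 2) / (2 * m ^ 2 * w)) := by
  have hm2 : m ^ 2 = 2 / (τ * a) := by rw [hm, sq_sqrt (by positivity)]
  have ham : a * m = √(2 * a / τ) := by
    rw [hm, show 2 * a / τ = a ^ 2 * (2 / (τ * a)) by field_simp, sqrt_mul (sq_nonneg a),
      sqrt_sq ha.le]
  have hprefactor : √(ζ / (2 * π * w ^ 3)) = √w / (√(π * τ) * w ^ 2) := by
    rw [← sqrt_sq (by positivity : 0 ≤ √w / (√(π * τ) * w ^ 2)), div_pow, mul_pow,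
      sq_sqrt hw.le, sq_sqrt (by positivity), hζ]
    congr 1
    field_simp
  have hexponent : -(ζ * (w - m) ^ 2) / (2 * m ^ 2 * w)
      = -(a / 2) * w + -(1 / (τ * w)) + √(2 * a / τ) := by
    have hm0 : m ≠ 0 := by rw [hm]; positivity
    have hτam : τ * a * m ^ 2 = 2 := by rw [hm2]; field_simp
    rw [hζ, ← ham]
    field_simp
    linear_combination (w ^ 2 - 2 * w * m) * hτam
  rw [hprefactor, hexponent, exp_add, exp_add, exp_neg (√(2 * a / τ))]
  field_simp

/-- **Reweighting the inverse-exponential law gives the inverse Gaussian distribution.**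
Let `τ > 0`, `a > 0`, `m = √(2/(τa))`, `ζ = 2/τ`, and let `μ_0^w` be the measure on
`(0,∞)` with Lebesgue density `w ↦ (1/τ) exp(−1/(τw)) (1/w²)`.  Then reweighting
`μ_0^w` with the unnormalized density `w ↦ w^{1/2} exp(−(a/2)w)` gives the inverse
Gaussian distribution `IG(m, ζ)`, with Lebesgue density
`w ↦ √(ζ/(2πw³)) exp(−ζ(w−m)²/(2m²w))` on `(0,∞)`.  In particular,
`∫_0^∞ w^{−3/2} exp(−(a/2)w − 1/(τw)) dw = √(πτ) exp(−√(2a/τ))`. -/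
theorem reweight_inverse_exponential_eq_inverseGaussian
    (τ a m ζ : ℝ) (hτ : 0 < τ) (ha : 0 < a)
    (hm : m = Real.sqrt (2 / (τ * a))) (hζ : ζ = 2 / τ) :
    (((volume.restrict (Set.Ioi (0 : ℝ))).withDensity
        (fun w => ENNReal.ofReal ((1 / τ) * Real.exp (-(1 / (τ * w))) * (1 / w ^ 2)))).withDensity
      (fun w => ENNReal.ofReal ((Real.sqrt w * Real.exp (-(a / 2) * w)) /
        ∫ v, Real.sqrt v * Real.exp (-(a / 2) * v)
          ∂((volume.restrict (Set.Ioi (0 : ℝ))).withDensity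
            (fun u => ENNReal.ofReal ((1 / τ) * Real.exp (-(1 / (τ * u))) * (1 / u ^ 2)))))))
      = (volume.restrict (Set.Ioi (0 : ℝ))).withDensity
          (fun w => ENNReal.ofReal (Real.sqrt (ζ / (2 * π * w ^ 3)) *
            Real.exp (-(ζ * (w - m) ^ 2) / (2 * m ^ 2 * w)))) ∧
    (∫ w in Set.Ioi (0 : ℝ), w ^ (-(3 : ℝ) / 2) * Real.exp (-(a / 2) * w - 1 / (τ * w)))
      = Real.sqrt (π * τ) * Real.exp (-Real.sqrt (2 * a / τ)) := by
  refine ⟨?_, integral_inverseGaussian_kernel hτ ha⟩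
  rw [integral_sqrt_mul_exp_withDensity_inverseExponential hτ ha,
    withDensity_ofReal_withDensity_ofReal (by fun_prop) (by fun_prop) fun w => by positivity]
  refine withDensity_congr_ae ?_
  filter_upwards [ae_restrict_mem measurableSet_Ioi] with w hw
  rw [inverseExponential_mul_reweight_eq_inverseGaussian hτ ha hm hζ hw]
end
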